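/- arXiv:2602.21466 — 2 statements merged into one kernel-verified Lean document; each statement's English description precedes it below -/
import Mathlib

section
/- For any nonnegative integers j1, j2, j3 satisfying the triangle condition and not all equal to zero, there exist nonnegative integers ℓ1, ℓ2, ℓ3 such that: (1) for each i, the triple (ji, ℓi, 1) satisfies the triangle condition; (2) (ℓ1, ℓ2, ℓ3) satisfies the triangle condition; (3) ℓ1 + ℓ2 + ℓ3 is even; and (4) there is no permutation (a,b,c) of the indices with ja = ℓa and (jb, ℓb) = (jc, ℓc). -/
/-- Triangle condition on a triple of natural numbers. -/
def Tri (a b c : ℕ) : Prop := a ≤ b + c ∧ b ≤ a + c ∧ c ≤ a + b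

theorem stmt2 (j1 j2 j3 : ℕ) (htri : Tri j1 j2 j3)
    (hnz : ¬(j1 = 0 ∧ j2 = 0 ∧ j3 = 0)) :
    ∃ ℓ1 ℓ2 ℓ3 : ℕ,
      (Tri j1 ℓ1 1 ∧ Tri j2 ℓ2 1 ∧ Tri j3 ℓ3 1) ∧
      Tri ℓ1 ℓ2 ℓ3 ∧
      Even (ℓ1 + ℓ2 + ℓ3) ∧
      ¬((j1 = ℓ1 ∧ j2 = j3 ∧ ℓ2 = ℓ3) ∨ (j2 = ℓ2 ∧ j1 = j3 ∧ ℓ1 = ℓ3) ∨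
        (j3 = ℓ3 ∧ j1 = j2 ∧ ℓ1 = ℓ2)) := by
  obtain ⟨h1, h2, h3⟩ := htri
  by_cases hp : (j1 + j2 + j3) % 2 = 0
  · by_cases h23 : j2 = j3
    · by_cases h13 : j1 = j3
      · -- all equal, even, nonzero ⇒ j1 ≥ 2
        refine ⟨j1 - 1, j2, j3 + 1, ?_⟩
        simp only [Tri, Nat.even_iff]
        omega
      · refine ⟨j1 + 1, j2, j3 + 1, ?_⟩
        simp only [Tri, Nat.even_iff]
        omega
    · refine ⟨j1, j2 + 1, j3 + 1, ?_⟩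
      simp only [Tri, Nat.even_iff]
      omega
  · by_cases h23 : j2 = j3
    · by_cases h13 : j1 = j3
      · refine ⟨j1 + 1, j2, j3, ?_⟩
        simp only [Tri, Nat.even_iff]
        omega
      · refine ⟨j1, j2 + 1, j3, ?_⟩
        simp only [Tri, Nat.even_iff]
        omega
    · refine ⟨j1 + 1, j2, j3, ?_⟩
      simp only [Tri, Nat.even_iff]
      omega
end

section
/- Suppose j1 = j2 < j3 are nonnegative integers satisfying the triangle condition (so 1 ≤ j3 ≤ 2j1 and j1 ≥ 1). If j1 + j2 + j3 is even, then ℓ1 = j1, ℓ2 = j2 + 1, ℓ3 = j3 − 1 satisfies: each (ji, ℓi, 1) satisfies the triangle condition, (ℓ1, ℓ2, ℓ3) satisfies the triangle condition, ℓ1 + ℓ2 + ℓ3 is even, and no permutation (a,b,c) of indices has ja = ℓa with (jb, ℓb) = (jc, ℓc). -/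
theorem stmt14 (j1 j2 j3 : ℕ) (h12 : j1 = j2) (h23 : j2 < j3)
    (htri : Tri j1 j2 j3) (heven : Even (j1 + j2 + j3))
    (ℓ1 ℓ2 ℓ3 : ℕ) (h1 : ℓ1 = j1) (h2 : ℓ2 = j2 + 1) (h3 : ℓ3 = j3 - 1) :
    (Tri j1 ℓ1 1 ∧ Tri j2 ℓ2 1 ∧ Tri j3 ℓ3 1) ∧
    Tri ℓ1 ℓ2 ℓ3 ∧ Even (ℓ1 + ℓ2 + ℓ3) ∧
    ¬((j1 = ℓ1 ∧ j2 = j3 ∧ ℓ2 = ℓ3) ∨ (j2 = ℓ2 ∧ j1 = j3 ∧ ℓ1 = ℓ3) ∨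
      (j3 = ℓ3 ∧ j1 = j2 ∧ ℓ1 = ℓ2)) := by
  obtain ⟨k, hk⟩ := heven
  obtain ⟨a, b, c⟩ := htri
  simp only [Tri, Even]
  constructor
  · omega
  refine ⟨by omega, ⟨k, by omega⟩, by omega⟩
end
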